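/- Define generalized Hermite polynomials with values in the Clifford algebra R_{0,m} by H_0(x) = 1 and H_{n+1}(x) = x·H_n(x) - ∂_x H_n(x), where x is the vector variable and ∂_x = Σ_j e_j ∂_{x_j} the Dirac operator. Then for all n ≥ 0: H_{2n}(x) = Σ_{ν=0}^n C(n,ν) c_n(ν) x^{2(n-ν)} and H_{2n+1}(x) = Σ_{ν=0}^n C(n,ν) c_{n+1}(ν) x^{2(n-ν)+1}, where c_n(0) = 1 and c_n(ν) = Π_{l=1}^ν (m + 2(n-l)). -/

import Mathlib

/-!
The Clifford relations give `e_j x + x e_j = -2 x_j`, and with `∑_j e_j e_j = -m` this yields the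
Leibniz rule `∂(x f) = -m f - x ∂f - 2 E f`, where `E = ∑_j x_j ∂_{x_j}` is the Euler operator.
Since `E x^p = p x^p`, it gives `∂ x^{p+1} = -(m + 2p) x^p - x ∂ x^p`, hence
`∂ x^{2k+1} = -(m + 2k) x^{2k}` and `∂ x^{2k+2} = -(2k + 2) x^{2k+1}`. Substituting the claimed
formulas into `H_{n+1} = x H_n - ∂ H_n` then reduces each step of an induction on `n` to the
coefficient identities
`C(n,ν+1) c_{n+1}(ν+1) = C(n,ν+1) c_n(ν+1) + 2(n-ν) C(n,ν) c_n(ν)` and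
`C(n+1,ν+1) c_{n+1}(ν+1) = C(n,ν+1) c_{n+1}(ν+1) + (m+2(n-ν)) C(n,ν) c_{n+1}(ν)`,
which follow from Pascal's rule and `c_{n+1}(ν+1) = (m + 2n) c_n(ν)`.
-/

open scoped BigOperators

/-- The Dirac operator `∂_x f = ∑_j e_j ∂_{x_j} f`. -/
noncomputable def diracOp {m : ℕ} {A : Type*} [NormedRing A] [NormedAlgebra ℝ A]
    (e : Fin m → A) (f : (Fin m → ℝ) → A) (x : Fin m → ℝ) : A :=
  ∑ j : Fin m, e j * fderiv ℝ f x (Pi.single j 1)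

/-- Generalized (Clifford-)Hermite polynomials:
`H 0 = 1`, `H (n+1) x = x · H n x - ∂_x (H n) x`, where `x = ∑ x j • e j`. -/
noncomputable def cliffordHermite {m : ℕ} {A : Type*} [NormedRing A] [NormedAlgebra ℝ A]
    (e : Fin m → A) : ℕ → (Fin m → ℝ) → A
  | 0 => fun _ => 1
  | n + 1 => fun x =>
      (∑ j, x j • e j) * cliffordHermite e n x - diracOp e (cliffordHermite e n) x

/-- The constants `c n ν = ∏_{l=1}^ν (m + 2(n-l))`, with `c n 0 = 1`. -/
noncomputable def hermiteC (m : ℕ) (n ν : ℕ) : ℝ :=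
  ∏ l ∈ Finset.Icc 1 ν, ((m : ℝ) + 2 * ((n : ℝ) - (l : ℝ)))

open Finset

section Dirac

variable {m : ℕ} {A : Type*} [NormedRing A] [NormedAlgebra ℝ A] (e : Fin m → A)

noncomputable def cliffordVec : (Fin m → ℝ) →L[ℝ] A :=
  LinearMap.toContinuousLinearMap (Fintype.linearCombination ℝ e)

theorem cliffordVec_apply (x : Fin m → ℝ) : cliffordVec e x = ∑ j, x j • e j := by
  simp [cliffordVec, Fintype.linearCombination_apply]

theorem cliffordVec_single (j : Fin m) : cliffordVec e (Pi.single j 1) = e j := by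
  simp [cliffordVec, Fintype.linearCombination_apply_single]

variable {e}

theorem diracOp_const (c : A) (x : Fin m → ℝ) : diracOp e (fun _ => c) x = 0 := by
  simp [diracOp]

theorem diracOp_fun_sum {ι : Type*} (s : Finset ι) {f : ι → (Fin m → ℝ) → A} {x : Fin m → ℝ}
    (hf : ∀ i ∈ s, DifferentiableAt ℝ (f i) x) :
    diracOp e (fun y => ∑ i ∈ s, f i y) x = ∑ i ∈ s, diracOp e (f i) x := by
  simp only [diracOp, fderiv_fun_sum hf, _root_.sum_apply, mul_sum]
  exact sum_comm

theorem diracOp_const_smul (c : ℝ) (f : (Fin m → ℝ) → A) (x : Fin m → ℝ) :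
    diracOp e (fun y => c • f y) x = c • diracOp e f x := by
  have hf : fderiv ℝ (fun y => c • f y) x = c • fderiv ℝ f x :=
    congrFun (fderiv_const_smul_field (f := f) c) x
  simp only [diracOp, hf, FunLike.coe_smul, Pi.smul_apply, mul_smul_comm, smul_sum]

theorem fderiv_pow_apply_self {E : Type*} [NormedAddCommGroup E] [NormedSpace ℝ E]
    (L : E →L[ℝ] A) (p : ℕ) (x : E) :
    fderiv ℝ (fun y => L y ^ p) x x = (p : ℝ) • L x ^ p := by
  induction p with
  | zero => simp
  | succ p ih =>
    simp_rw [pow_succ' (L _)]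
    rw [fderiv_fun_mul' L.differentiableAt (L.differentiableAt.fun_pow p)]
    simp [ih, L.fderiv, add_smul]

theorem diracOp_sum_smul_cliffordVec_pow {ι : Type*} (s : Finset ι) (c : ι → ℝ) (p : ι → ℕ)
    (x : Fin m → ℝ) :
    diracOp e (fun y => ∑ i ∈ s, c i • cliffordVec e y ^ p i) x =
      ∑ i ∈ s, c i • diracOp e (fun y => cliffordVec e y ^ p i) x := by
  rw [diracOp_fun_sum s fun i _ =>
    ((cliffordVec e).differentiableAt.fun_pow (p i)).fun_const_smul (c i)]
  exact sum_congr rfl fun i _ => diracOp_const_smul (c i) _ x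

section Clifford

variable (he : ∀ j, e j ^ 2 = -1) (hanti : ∀ j k, j ≠ k → e j * e k = -(e k * e j))
include he

theorem sum_mul_mul_self (a : A) : ∑ j, e j * (e j * a) = -(m : ℝ) • a := by
  simp [← mul_assoc, ← sq, he, ← Nat.cast_smul_eq_nsmul ℝ]

include hanti

theorem mul_cliffordVec_add_cliffordVec_mul (j : Fin m) (x : Fin m → ℝ) :
    e j * cliffordVec e x + cliffordVec e x * e j = -(2 * x j) • (1 : A) := by
  have hterm (k : Fin m) : e j * (x k • e k) + x k • e k * e j =
      if k = j then -(2 * x j) • (1 : A) else 0 := by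
    split_ifs with hkj
    · subst hkj
      rw [mul_smul_comm, smul_mul_assoc, ← smul_add, ← sq, he]
      module
    · rw [mul_smul_comm, smul_mul_assoc, ← smul_add, hanti k j hkj, add_neg_cancel, smul_zero]
  rw [cliffordVec_apply, mul_sum, sum_mul, ← sum_add_distrib, sum_congr rfl fun k _ => hterm k,
    sum_ite_eq' univ j, if_pos (mem_univ j)]

theorem diracOp_cliffordVec_mul {f : (Fin m → ℝ) → A} {x : Fin m → ℝ}
    (hf : DifferentiableAt ℝ f x) :
    diracOp e (fun y => cliffordVec e y * f y) x =
      -(m : ℝ) • f x - cliffordVec e x * diracOp e f x - (2 : ℝ) • fderiv ℝ f x x := by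
  have heuler : fderiv ℝ f x x = ∑ j, x j • fderiv ℝ f x (Pi.single j 1) := by
    nth_rewrite 2 [pi_eq_sum_univ' x]
    simp only [map_sum, map_smul]
  have hterm (j : Fin m) :
      e j * (cliffordVec e x * fderiv ℝ f x (Pi.single j 1) + e j * f x) =
        (-2 : ℝ) • (x j • fderiv ℝ f x (Pi.single j 1))
          - cliffordVec e x * (e j * fderiv ℝ f x (Pi.single j 1)) + e j * (e j * f x) := by
    rw [mul_add, ← mul_assoc, eq_sub_of_add_eq (mul_cliffordVec_add_cliffordVec_mul he hanti j x),
      sub_mul, smul_mul_assoc, one_mul, mul_assoc, ← neg_mul, ← smul_smul]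
  rw [diracOp, fderiv_fun_mul' (cliffordVec e).differentiableAt hf]
  simp only [add_apply, smul_apply, (cliffordVec e).fderiv, cliffordVec_single, smul_eq_mul,
    op_smul_eq_mul, hterm, sum_add_distrib, sum_sub_distrib, ← smul_sum, ← heuler, ← mul_sum,
    sum_mul_mul_self he]
  rw [← diracOp]
  module

theorem diracOp_cliffordVec_pow_succ (p : ℕ) (x : Fin m → ℝ) :
    diracOp e (fun y => cliffordVec e y ^ (p + 1)) x =
      -((m : ℝ) + 2 * p) • cliffordVec e x ^ p -
        cliffordVec e x * diracOp e (fun y => cliffordVec e y ^ p) x := by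
  simp_rw [pow_succ' (cliffordVec e _)]
  rw [diracOp_cliffordVec_mul he hanti ((cliffordVec e).differentiableAt.fun_pow p),
    fderiv_pow_apply_self]
  module

theorem diracOp_cliffordVec_pow_two_mul_add_one (k : ℕ) (x : Fin m → ℝ) :
    diracOp e (fun y => cliffordVec e y ^ (2 * k + 1)) x =
      -((m : ℝ) + 2 * k) • cliffordVec e x ^ (2 * k) := by
  induction k with
  | zero => simpa [diracOp_const] using diracOp_cliffordVec_pow_succ he hanti 0 x
  | succ k ih =>
    rw [show 2 * (k + 1) = 2 * k + 1 + 1 by ring, diracOp_cliffordVec_pow_succ he hanti,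
      diracOp_cliffordVec_pow_succ he hanti, ih]
    simp only [mul_sub, mul_smul_comm, ← pow_succ', add_assoc, Nat.reduceAdd]
    push_cast
    module

theorem diracOp_cliffordVec_pow_two_mul_add_two (k : ℕ) (x : Fin m → ℝ) :
    diracOp e (fun y => cliffordVec e y ^ (2 * k + 2)) x =
      -(2 * (k : ℝ) + 2) • cliffordVec e x ^ (2 * k + 1) := by
  rw [diracOp_cliffordVec_pow_succ he hanti, diracOp_cliffordVec_pow_two_mul_add_one he hanti,
    mul_smul_comm, ← pow_succ']
  push_cast
  module

end Clifford

end Dirac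

section Coefficients

variable {m : ℕ}

theorem hermiteC_zero (n : ℕ) : hermiteC m n 0 = 1 := by
  simp [hermiteC]

theorem hermiteC_succ (n ν : ℕ) :
    hermiteC m n (ν + 1) = hermiteC m n ν * ((m : ℝ) + 2 * ((n : ℝ) - ν - 1)) := by
  rw [hermiteC, prod_Icc_succ_top (by omega), ← hermiteC]
  push_cast
  ring

theorem hermiteC_succ_succ (n ν : ℕ) :
    hermiteC m (n + 1) (ν + 1) = ((m : ℝ) + 2 * n) * hermiteC m n ν := by
  induction ν with
  | zero => simp [hermiteC_succ, hermiteC_zero]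
  | succ ν ih =>
    rw [hermiteC_succ, ih, hermiteC_succ n ν]
    push_cast
    ring

theorem choose_mul_hermiteC_succ_succ (n ν : ℕ) :
    (n.choose (ν + 1) : ℝ) * hermiteC m (n + 1) (ν + 1) =
      (n.choose (ν + 1) : ℝ) * hermiteC m n (ν + 1) +
        2 * ((n : ℝ) - ν) * ((n.choose ν : ℝ) * hermiteC m n ν) := by
  have hchoose : (n.choose (ν + 1) : ℝ) * (ν + 1) = n.choose ν * ((n : ℝ) - ν) := by
    rcases le_or_gt ν n with hν | hν
    · rw [← Nat.cast_sub hν]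
      exact_mod_cast Nat.choose_succ_right_eq n ν
    · simp [Nat.choose_eq_zero_of_lt hν, Nat.choose_eq_zero_of_lt (hν.trans (lt_add_one ν))]
  rw [hermiteC_succ_succ, hermiteC_succ]
  linear_combination (2 * hermiteC m n ν) * hchoose

theorem succ_choose_mul_hermiteC_succ (n ν : ℕ) :
    ((n + 1).choose (ν + 1) : ℝ) * hermiteC m (n + 1) (ν + 1) =
      (n.choose (ν + 1) : ℝ) * hermiteC m (n + 1) (ν + 1) +
        ((m : ℝ) + 2 * ((n : ℝ) - ν)) * ((n.choose ν : ℝ) * hermiteC m (n + 1) ν) := by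
  rw [Nat.choose_succ_succ', hermiteC_succ]
  push_cast
  ring

end Coefficients

section Hermite

variable {m : ℕ} {A : Type*} [NormedRing A] [NormedAlgebra ℝ A] (e : Fin m → A)

noncomputable def hermiteEvenSum (n : ℕ) (x : Fin m → ℝ) : A :=
  ∑ ν ∈ range (n + 1), ((n.choose ν : ℝ) * hermiteC m n ν) • cliffordVec e x ^ (2 * (n - ν))

noncomputable def hermiteOddSum (n : ℕ) (x : Fin m → ℝ) : A :=
  ∑ ν ∈ range (n + 1),
    ((n.choose ν : ℝ) * hermiteC m (n + 1) ν) • cliffordVec e x ^ (2 * (n - ν) + 1)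

variable {e}

theorem cliffordHermite_succ_apply (n : ℕ) (x : Fin m → ℝ) :
    cliffordHermite e (n + 1) x =
      cliffordVec e x * cliffordHermite e n x - diracOp e (cliffordHermite e n) x := by
  rw [cliffordHermite, cliffordVec_apply]

variable (he : ∀ j, e j ^ 2 = -1) (hanti : ∀ j k, j ≠ k → e j * e k = -(e k * e j))
include he hanti

theorem cliffordVec_mul_sub_diracOp_hermiteEvenSum (n : ℕ) (x : Fin m → ℝ) :
    cliffordVec e x * hermiteEvenSum e n x - diracOp e (hermiteEvenSum e n) x =
      hermiteOddSum e n x := by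
  have hmul : cliffordVec e x * hermiteEvenSum e n x =
      ∑ ν ∈ range n, ((n.choose (ν + 1) : ℝ) * hermiteC m n (ν + 1)) •
        cliffordVec e x ^ (2 * (n - (ν + 1)) + 1) + cliffordVec e x ^ (2 * n + 1) := by
    rw [hermiteEvenSum, mul_sum, sum_range_succ']
    simp only [mul_smul_comm, ← pow_succ', Nat.choose_zero_right, hermiteC_zero, Nat.sub_zero,
      Nat.cast_one, one_mul, one_smul]
  have hdirac : diracOp e (hermiteEvenSum e n) x =
      ∑ ν ∈ range n, (-(2 * ((n : ℝ) - ν)) * ((n.choose ν : ℝ) * hermiteC m n ν)) •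
        cliffordVec e x ^ (2 * (n - (ν + 1)) + 1) := by
    unfold hermiteEvenSum
    rw [diracOp_sum_smul_cliffordVec_pow, sum_range_succ, Nat.sub_self]
    simp only [mul_zero, pow_zero, diracOp_const, smul_zero, add_zero]
    refine sum_congr rfl fun ν hν => ?_
    have hν : ν + 1 ≤ n := mem_range.mp hν
    rw [show 2 * (n - ν) = 2 * (n - (ν + 1)) + 2 by omega,
      diracOp_cliffordVec_pow_two_mul_add_two he hanti, smul_smul, Nat.cast_sub hν]
    congr 1
    push_cast
    ring
  rw [hmul, hdirac, hermiteOddSum, sum_range_succ', add_sub_right_comm, ← sum_sub_distrib]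
  simp only [Nat.choose_zero_right, hermiteC_zero, Nat.sub_zero, Nat.cast_one, one_mul, one_smul]
  congr 1
  refine sum_congr rfl fun ν _ => ?_
  rw [← sub_smul, choose_mul_hermiteC_succ_succ]
  congr 1
  ring

theorem cliffordVec_mul_sub_diracOp_hermiteOddSum (n : ℕ) (x : Fin m → ℝ) :
    cliffordVec e x * hermiteOddSum e n x - diracOp e (hermiteOddSum e n) x =
      hermiteEvenSum e (n + 1) x := by
  have hmul : cliffordVec e x * hermiteOddSum e n x =
      ∑ ν ∈ range (n + 1), ((n.choose (ν + 1) : ℝ) * hermiteC m (n + 1) (ν + 1)) •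
        cliffordVec e x ^ (2 * (n - ν)) + cliffordVec e x ^ (2 * (n + 1)) := by
    rw [sum_range_succ, Nat.choose_succ_self, Nat.cast_zero, zero_mul, zero_smul, add_zero,
      hermiteOddSum, mul_sum, sum_range_succ']
    simp only [mul_smul_comm, ← pow_succ', Nat.choose_zero_right, hermiteC_zero, Nat.sub_zero,
      Nat.cast_one, one_mul, one_smul]
    congr 1
    refine sum_congr rfl fun ν hν => ?_
    have hν : ν < n := mem_range.mp hν
    congr 2
    omega
  have hdirac : diracOp e (hermiteOddSum e n) x =
      ∑ ν ∈ range (n + 1),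
        (-((m : ℝ) + 2 * ((n : ℝ) - ν)) * ((n.choose ν : ℝ) * hermiteC m (n + 1) ν)) •
          cliffordVec e x ^ (2 * (n - ν)) := by
    unfold hermiteOddSum
    rw [diracOp_sum_smul_cliffordVec_pow]
    refine sum_congr rfl fun ν hν => ?_
    have hν : ν ≤ n := Nat.lt_succ_iff.mp (mem_range.mp hν)
    rw [diracOp_cliffordVec_pow_two_mul_add_one he hanti, smul_smul, Nat.cast_sub hν]
    congr 1
    ring
  rw [hmul, hdirac, hermiteEvenSum, sum_range_succ' _ (n + 1), add_sub_right_comm,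
    ← sum_sub_distrib]
  simp only [Nat.choose_zero_right, hermiteC_zero, Nat.sub_zero, Nat.add_sub_add_right,
    Nat.cast_one, one_mul, one_smul]
  congr 1
  refine sum_congr rfl fun ν _ => ?_
  rw [← sub_smul, succ_choose_mul_hermiteC_succ]
  congr 1
  ring

theorem cliffordHermite_eq_hermiteSum (n : ℕ) :
    cliffordHermite e (2 * n) = hermiteEvenSum e n ∧
      cliffordHermite e (2 * n + 1) = hermiteOddSum e n := by
  have hodd (n : ℕ) (heven : cliffordHermite e (2 * n) = hermiteEvenSum e n) :
      cliffordHermite e (2 * n + 1) = hermiteOddSum e n := by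
    funext x
    rw [cliffordHermite_succ_apply, heven, cliffordVec_mul_sub_diracOp_hermiteEvenSum he hanti]
  induction n with
  | zero =>
    have heven : cliffordHermite e (2 * 0) = hermiteEvenSum e 0 := by
      funext x
      simp [cliffordHermite, hermiteEvenSum, hermiteC_zero]
    exact ⟨heven, hodd 0 heven⟩
  | succ n ih =>
    have heven : cliffordHermite e (2 * (n + 1)) = hermiteEvenSum e (n + 1) := by
      funext x
      rw [show 2 * (n + 1) = 2 * n + 1 + 1 by ring, cliffordHermite_succ_apply, ih.2,
        cliffordVec_mul_sub_diracOp_hermiteOddSum he hanti]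
    exact ⟨heven, hodd _ heven⟩

end Hermite

/-- explicit form of the generalized Hermite polynomials:
`H_{2n}(x) = ∑_{ν=0}^n C(n,ν) c_n(ν) x^{2(n-ν)}` and
`H_{2n+1}(x) = ∑_{ν=0}^n C(n,ν) c_{n+1}(ν) x^{2(n-ν)+1}`,
where `x = ∑ x j • e j` and powers are Clifford powers. -/
theorem cliffordHermite_explicit {m : ℕ} {A : Type*} [NormedRing A] [NormedAlgebra ℝ A]
    (e : Fin m → A)
    (he : ∀ j, e j ^ 2 = -1)
    (hanti : ∀ j k, j ≠ k → e j * e k = -(e k * e j))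
    (n : ℕ) (x : Fin m → ℝ) :
    cliffordHermite e (2 * n) x =
      ∑ ν ∈ Finset.range (n + 1),
        ((n.choose ν : ℝ) * hermiteC m n ν) • (∑ j, x j • e j) ^ (2 * (n - ν)) ∧
    cliffordHermite e (2 * n + 1) x =
      ∑ ν ∈ Finset.range (n + 1),
        ((n.choose ν : ℝ) * hermiteC m (n + 1) ν) • (∑ j, x j • e j) ^ (2 * (n - ν) + 1) := by
  obtain ⟨heven, hodd⟩ := cliffordHermite_eq_hermiteSum he hanti n
  simp only [heven, hodd, hermiteEvenSum, hermiteOddSum, cliffordVec_apply, and_self]
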